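/- Let A ∈ ℝ^{n×n}, C ∈ ℝ^{p×n}, and B̄ ∈ ℝ^{n×q}. Let W* be the intersection of all (C,A)-invariant subspaces of ℝⁿ containing Im B̄, and let V* be the sum of all (Aᵀ,Cᵀ)-invariant subspaces of ℝⁿ contained in ker B̄ᵀ. Then V* = (W*)^⊥, i.e., the supremal (Aᵀ,Cᵀ)-invariant subspace contained in ker B̄ᵀ is the orthogonal complement of the infimal (C,A)-invariant subspace containing Im B̄. -/

import Mathlib

open Matrix

/-- A subspace `W` of Euclidean `ℝⁿ` is `(C,A)`-invariant if `(A + LC) W ⊆ W` for some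
output-injection matrix `L`. -/
def IsCAInvariantE {n p : ℕ} (A : Matrix (Fin n) (Fin n) ℝ)
    (C : Matrix (Fin p) (Fin n) ℝ) (W : Submodule ℝ (EuclideanSpace ℝ (Fin n))) : Prop :=
  ∃ L : Matrix (Fin n) (Fin p) ℝ, ∀ x ∈ W, (WithLp.toLp 2 ((A + L * C).mulVec x) : EuclideanSpace ℝ (Fin n)) ∈ W

/-- A subspace `V` of Euclidean `ℝⁿ` is `(Aᵀ,Cᵀ)`-invariant if `(Aᵀ + CᵀF) V ⊆ V` for some
matrix `F`. -/
def IsDualInvariantE {n p : ℕ} (A : Matrix (Fin n) (Fin n) ℝ)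
    (C : Matrix (Fin p) (Fin n) ℝ) (V : Submodule ℝ (EuclideanSpace ℝ (Fin n))) : Prop :=
  ∃ F : Matrix (Fin p) (Fin n) ℝ, ∀ x ∈ V, (WithLp.toLp 2 ((Aᵀ + Cᵀ * F).mulVec x) : EuclideanSpace ℝ (Fin n)) ∈ V

/-!
Transposition turns an output injection `L` making `W` invariant under `A + LC` into the feedback
`Lᵀ` making `Wᗮ` invariant under `Aᵀ + CᵀLᵀ`, and conversely; likewise `Im B̄ ⊆ W` iff
`Wᗮ ⊆ ker B̄ᵀ`. So `V ↦ Vᗮ` is an order-reversing involution exchanging the two families, and it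
turns the infimum of one into the supremum of the other.
-/

theorem Submodule.sSup_setOf_orthogonal_eq {𝕜 E : Type*} [RCLike 𝕜] [NormedAddCommGroup E]
    [InnerProductSpace 𝕜 E] [FiniteDimensional 𝕜 E] (P : Submodule 𝕜 E → Prop) :
    sSup {V | P Vᗮ} = (sInf {W | P W})ᗮ := by
  have hinv : Function.Involutive (orthogonal : Submodule 𝕜 E → Submodule 𝕜 E) :=
    fun K ↦ K.orthogonal_orthogonal
  calc sSup {V | P Vᗮ} = (sSup {V | P Vᗮ})ᗮᗮ := (orthogonal_orthogonal _).symm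
    _ = (sInf (orthogonal '' (orthogonal ⁻¹' {W | P W})))ᗮ := by
      rw [← sInf_orthogonal, sInf_image]; rfl
    _ = (sInf {W | P W})ᗮ := by rw [Set.image_preimage_eq _ hinv.surjective]

namespace Matrix

variable {ι κ : Type*} [Fintype ι] [Fintype κ]

theorem inner_toLp_mulVec (M : Matrix ι κ ℝ) (x : EuclideanSpace ℝ κ) (y : EuclideanSpace ℝ ι) :
    inner ℝ (WithLp.toLp 2 (M *ᵥ x) : EuclideanSpace ℝ ι) y =
      inner ℝ x (WithLp.toLp 2 (Mᵀ *ᵥ y) : EuclideanSpace ℝ κ) := by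
  simp only [EuclideanSpace.inner_eq_star_dotProduct, star_trivial, dotProduct_mulVec,
    vecMul_transpose, dotProduct_comm]

theorem forall_toLp_mulVec_mem_orthogonal_iff (B : Matrix ι κ ℝ)
    (V : Submodule ℝ (EuclideanSpace ℝ ι)) :
    (∀ c : κ → ℝ, (WithLp.toLp 2 (B *ᵥ c) : EuclideanSpace ℝ ι) ∈ Vᗮ) ↔
      ∀ x ∈ V, Bᵀ *ᵥ x = 0 := by
  have key : ∀ (c : κ → ℝ) (x : EuclideanSpace ℝ ι),
      inner ℝ (WithLp.toLp 2 (B *ᵥ c) : EuclideanSpace ℝ ι) x =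
        inner ℝ (WithLp.toLp 2 c : EuclideanSpace ℝ κ) (WithLp.toLp 2 (Bᵀ *ᵥ x)) :=
    fun c x ↦ inner_toLp_mulVec B (WithLp.toLp 2 c) x
  simp only [Submodule.mem_orthogonal', key]
  constructor
  · intro h x hx
    simpa using h (Bᵀ *ᵥ x) x hx
  · intro h c x hx
    simp [h x hx]

theorem toLp_transpose_mulVec_mem_orthogonal (M : Matrix ι ι ℝ)
    {V : Submodule ℝ (EuclideanSpace ℝ ι)}
    (hV : ∀ x ∈ V, (WithLp.toLp 2 (M *ᵥ x) : EuclideanSpace ℝ ι) ∈ V) :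
    ∀ y ∈ Vᗮ, (WithLp.toLp 2 (Mᵀ *ᵥ y) : EuclideanSpace ℝ ι) ∈ Vᗮ := by
  intro y hy x hx
  rw [← inner_toLp_mulVec]
  exact Submodule.inner_right_of_mem_orthogonal (hV x hx) hy

end Matrix

theorem isCAInvariantE_orthogonal_iff {n p : ℕ} (A : Matrix (Fin n) (Fin n) ℝ)
    (C : Matrix (Fin p) (Fin n) ℝ) (V : Submodule ℝ (EuclideanSpace ℝ (Fin n))) :
    IsCAInvariantE A C Vᗮ ↔ IsDualInvariantE A C V := by
  constructor
  · rintro ⟨L, hL⟩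
    refine ⟨Lᵀ, ?_⟩
    simpa [transpose_add, transpose_mul, V.orthogonal_orthogonal] using
      toLp_transpose_mulVec_mem_orthogonal _ hL
  · rintro ⟨F, hF⟩
    refine ⟨Fᵀ, ?_⟩
    simpa [transpose_add, transpose_mul] using toLp_transpose_mulVec_mem_orthogonal _ hF

/-- The supremal `(Aᵀ,Cᵀ)`-invariant subspace `V*` contained in `ker B̄ᵀ`
is the orthogonal complement of the infimal `(C,A)`-invariant subspace `W*` containing
`Im B̄`. -/
theorem supremal_dual_eq_orthogonal_infimal (n p q : ℕ)
    (A : Matrix (Fin n) (Fin n) ℝ) (C : Matrix (Fin p) (Fin n) ℝ)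
    (Bbar : Matrix (Fin n) (Fin q) ℝ) :
    sSup {V : Submodule ℝ (EuclideanSpace ℝ (Fin n)) |
        IsDualInvariantE A C V ∧ ∀ x ∈ V, Bbarᵀ.mulVec x = 0} =
      (sInf {W : Submodule ℝ (EuclideanSpace ℝ (Fin n)) |
        IsCAInvariantE A C W ∧ ∀ c : Fin q → ℝ, (WithLp.toLp 2 (Bbar.mulVec c) : EuclideanSpace ℝ (Fin n)) ∈ W})ᗮ := by
  simp only [← isCAInvariantE_orthogonal_iff, ← forall_toLp_mulVec_mem_orthogonal_iff]
  exact Submodule.sSup_setOf_orthogonal_eq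
    (fun W ↦ IsCAInvariantE A C W ∧ ∀ c, (WithLp.toLp 2 (Bbar *ᵥ c) : EuclideanSpace ℝ (Fin n)) ∈ W)
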